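/- Let R = {R_i, t_i}_{i≥0} be a purely inseparable tower arising from a pair (R, I_0) satisfying conditions (d) and (f) with distinguished principal ideal I_1 ⊆ R_1, and suppose there exist generators f_0 of I_0 and f_1 of I_1 such that F_i(f_1 mod I_0R_{i+1}) = f_0 mod I_0R_i for all i ≥ 0. If condition (g') holds (for every i ≥ 0, I_0·(R_i)_{I_0-tor} = 0 and there is an isomorphism of graded rings Φ_i• : gr_{I_1}(R_{i+1}) → gr_{I_0}(R_i) with Φ_i^0 composed with the projection R_{i+1}/I_0R_{i+1} → R_{i+1}/I_1R_{i+1} equal to F_i), then condition (g) holds, without assuming that the rings R_i are I_0-adically Zariskian. -/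
import Mathlib


open Submodule

section Preamble

variable {A : Type*} [CommRing A]

/-- The submodule of `I`-torsion elements: elements killed by a power of each element of `I`. -/
def Itor (I : Ideal A) (M : Type*) [AddCommGroup M] [Module A M] : Submodule A M where
  carrier := {x | ∀ a ∈ I, ∃ n : ℕ, a ^ n • x = 0}
  zero_mem' := fun a _ => ⟨1, smul_zero _⟩
  add_mem' := by
    rintro x y hx hy a ha
    obtain ⟨n, hn⟩ := hx a ha
    obtain ⟨m, hm⟩ := hy a ha
    refine ⟨n + m, ?_⟩
    have h1 : a ^ (n + m) • x = 0 := by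
      rw [pow_add, mul_comm, mul_smul, hn, smul_zero]
    have h2 : a ^ (n + m) • y = 0 := by
      rw [pow_add, mul_smul, hm, smul_zero]
    rw [smul_add, h1, h2, add_zero]
  smul_mem' := by
    rintro c x hx a ha
    obtain ⟨n, hn⟩ := hx a ha
    exact ⟨n, by rw [smul_comm, hn, smul_zero]⟩

lemma mem_pow_zero (I : Ideal A) (x : A) : x ∈ I ^ 0 := by
  simp [Ideal.one_eq_top]

lemma mul_mem_pow_add {I : Ideal A} {m n : ℕ} {x y : A}
    (hx : x ∈ I ^ m) (hy : y ∈ I ^ n) : x * y ∈ I ^ (m + n) := by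
  rw [pow_add]; exact Ideal.mul_mem_mul hx hy

/-- The `n`-th graded piece `Iⁿ/Iⁿ⁺¹` of the conormal cone of `(A, I)`. -/
abbrev GrPiece (I : Ideal A) (n : ℕ) :=
  (I ^ n : Ideal A) ⧸ (Submodule.comap (I ^ n : Ideal A).subtype (I ^ (n + 1) : Ideal A))

/-- Class of an element of `Iⁿ` in the graded piece `Iⁿ/Iⁿ⁺¹`. -/
def grMk (I : Ideal A) (n : ℕ) (x : A) (hx : x ∈ I ^ n) : GrPiece I n :=
  Submodule.Quotient.mk ⟨x, hx⟩

lemma grMk_eq_iff (I : Ideal A) (n : ℕ) {x y : A} (hx : x ∈ I ^ n) (hy : y ∈ I ^ n) :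
    grMk I n x hx = grMk I n y hy ↔ x - y ∈ I ^ (n + 1) := by
  rw [grMk, grMk, Submodule.Quotient.eq]
  rfl

/-- The map on graded pieces induced by a ring homomorphism `f` with `f(Iⁿ) ⊆ Jⁿ`. -/
def grMap {B : Type*} [CommRing B] (f : A →+* B) (I : Ideal A) (J : Ideal B)
    (hf : ∀ n, ∀ x ∈ I ^ n, f x ∈ J ^ n) (n : ℕ) :
    GrPiece I n → GrPiece J n := by
  refine Quotient.lift (fun x => grMk J n (f x.1) (hf n x.1 x.2)) ?_
  intro x y hxy
  rw [grMk_eq_iff]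
  have hxy0 : x - y ∈ Submodule.comap (I ^ n : Ideal A).subtype (I ^ (n + 1) : Ideal A) :=
    Submodule.quotientRel_def _ |>.mp hxy
  have hxy' : (x : A) - (y : A) ∈ I ^ (n + 1) := hxy0
  have := hf (n + 1) _ hxy'
  rwa [map_sub] at this

@[simp] lemma grMap_mk {B : Type*} [CommRing B] (f : A →+* B) (I : Ideal A) (J : Ideal B)
    (hf : ∀ n, ∀ x ∈ I ^ n, f x ∈ J ^ n) (n : ℕ) (x : A) (hx : x ∈ I ^ n) :
    grMap f I J hf n (grMk I n x hx) = grMk J n (f x) (hf n x hx) := rfl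


lemma gen_mem {I : Ideal A} {a : A} (h : I = Ideal.span {a}) : a ∈ I := by
  rw [h]; exact Ideal.mem_span_singleton_self a

lemma gen_mem_pow_one {I : Ideal A} {a : A} (h : I = Ideal.span {a}) : a ∈ I ^ 1 := by
  rw [pow_one]; exact gen_mem h

lemma mem_pow_one {I : Ideal A} {a : A} (ha : a ∈ I) : a ∈ I ^ 1 := by
  rwa [pow_one]

lemma mul_mem_Itor {I : Ideal A} {x y : A} (hy : y ∈ Itor I A) :
    x * y ∈ Itor I A := by
  simpa using (Itor I A).smul_mem x hy

/-- Multiplicativity of a family of maps between graded pieces: `g` respects the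
multiplication of the conormal cones. -/
def GradedMul {A : Type*} [CommRing A] {B : Type*} [CommRing B] (I : Ideal A) (J : Ideal B)
    (g : ∀ n, GrPiece I n →+ GrPiece J n) : Prop :=
  ∀ (m n : ℕ) (x y : A) (hx : x ∈ I ^ m) (hy : y ∈ I ^ n) (u v : B) (hu : u ∈ J ^ m)
    (hv : v ∈ J ^ n),
    g m (grMk I m x hx) = grMk J m u hu →
    g n (grMk I n y hy) = grMk J n v hv →
    g (m + n) (grMk I (m + n) (x * y) (mul_mem_pow_add hx hy)) =
      grMk J (m + n) (u * v) (mul_mem_pow_add hu hv)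

section Tower

universe u

variable (R : ℕ → Type u) [∀ i, CommRing (R i)] (t : ∀ i, R i →+* R (i + 1))

/-- The composite transition map `R 0 → R i` of a tower. -/
def chain : ∀ i, R 0 →+* R i
  | 0 => RingHom.id (R 0)
  | (i + 1) => (t i).comp (chain i)

/-- The composite transition map `R 1 → R (i+1)` of a tower. -/
def chain1 : ∀ i, R 1 →+* R (i + 1)
  | 0 => RingHom.id (R 1)
  | (i + 1) => (t (i + 1)).comp (chain1 i)

variable (I0 : Ideal (R 0))

/-- The extension `I₀Rᵢ` of `I₀` to the `i`-th layer. -/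
def I0R (i : ℕ) : Ideal (R i) := I0.map (chain R t i)

lemma I0R_succ (i : ℕ) : I0R R t I0 (i + 1) = (I0R R t I0 i).map (t i) := by
  rw [I0R, I0R, Ideal.map_map]; rfl

/-- The induced map `t̄ᵢ : Rᵢ/I₀Rᵢ → Rᵢ₊₁/I₀Rᵢ₊₁`. -/
def tbar (i : ℕ) : R i ⧸ I0R R t I0 i →+* R (i + 1) ⧸ I0R R t I0 (i + 1) :=
  Ideal.quotientMap _ (t i) (by rw [I0R_succ]; exact Ideal.le_comap_map)

lemma t_pow_mem (i : ℕ) : ∀ n, ∀ x ∈ (I0R R t I0 i) ^ n, t i x ∈ (I0R R t I0 (i + 1)) ^ n := by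
  intro n x hx
  have : t i x ∈ Ideal.map (t i) ((I0R R t I0 i) ^ n) := Ideal.mem_map_of_mem _ hx
  rwa [Ideal.map_pow, ← I0R_succ] at this

/-- The extension `I₁Rᵢ₊₁` of a principal ideal `I₁ ⊆ R₁`. -/
def I1R (I1 : Ideal (R 1)) (i : ℕ) : Ideal (R (i + 1)) := I1.map (chain1 R t i)

variable (p : ℕ)

/-- The torsion-part conditions (g) of a (pre)perfectoid tower, for the `i`-th layer:
`I₀·(Rᵢ)_{I₀-tor} = 0` and existence of a bijection `(Fᵢ)_tor` compatible with `Fᵢ`. -/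
def CondG (F : ∀ i, R (i + 1) ⧸ I0R R t I0 (i + 1) →+* R i ⧸ I0R R t I0 i) (i : ℕ) : Prop :=
  (∀ a ∈ I0R R t I0 i, ∀ x ∈ Itor (I0R R t I0 i) (R i), a * x = 0) ∧
  ∃ Ftor : Itor (I0R R t I0 (i + 1)) (R (i + 1)) → Itor (I0R R t I0 i) (R i),
    Function.Bijective Ftor ∧
    ∀ x, Ideal.Quotient.mk (I0R R t I0 i) (Ftor x).1 =
      F i (Ideal.Quotient.mk (I0R R t I0 (i + 1)) x.1)

/-- The conormal-cone conditions (g') of Theorem 3.8, for the `i`-th layer: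
`I₀·(Rᵢ)_{I₀-tor} = 0` and existence of a graded ring isomorphism
`Φᵢ : gr_{I₁}(Rᵢ₊₁) → gr_{I₀}(Rᵢ)` whose degree-0 component, composed with the projection
`Rᵢ₊₁/I₀Rᵢ₊₁ → Rᵢ₊₁/I₁Rᵢ₊₁`, is `Fᵢ`. -/
def CondG' (F : ∀ i, R (i + 1) ⧸ I0R R t I0 (i + 1) →+* R i ⧸ I0R R t I0 i)
    (I1 : Ideal (R 1)) (i : ℕ) : Prop :=
  (∀ a ∈ I0R R t I0 i, ∀ x ∈ Itor (I0R R t I0 i) (R i), a * x = 0) ∧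
  ∃ g : ∀ n, GrPiece (I1R R t I1 i) n →+ GrPiece (I0R R t I0 i) n,
    (∀ n, Function.Bijective (g n)) ∧
    GradedMul (I1R R t I1 i) (I0R R t I0 i) g ∧
    ∀ (x : R (i + 1)) (u : R i),
      Ideal.Quotient.mk (I0R R t I0 i) u = F i (Ideal.Quotient.mk (I0R R t I0 (i + 1)) x) →
      g 0 (grMk (I1R R t I1 i) 0 x (mem_pow_zero _ x)) =
        grMk (I0R R t I0 i) 0 u (mem_pow_zero _ u)

/-- `R` together with the transition maps `t` is a preperfectoid tower arising from
`(R 0, I0)` (Definition 3.1: conditions (a)–(d), (f), (g)). -/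
def IsPreperfectoidTower : Prop :=
  (p : R 0) ∈ I0 ∧
  (∀ i, Function.Injective (tbar R t I0 i)) ∧
  I0.IsPrincipal ∧
  ∃ F : ∀ i, R (i + 1) ⧸ I0R R t I0 (i + 1) →+* R i ⧸ I0R R t I0 i,
    (∀ i x, tbar R t I0 i (F i x) = x ^ p) ∧
    (∀ i, Function.Surjective (F i)) ∧
    (∃ I1 : Ideal (R 1), I1.IsPrincipal ∧ I1 ^ p = I0R R t I0 1 ∧
      ∀ i, RingHom.ker (F i) =
        I1.map ((Ideal.Quotient.mk (I0R R t I0 (i + 1))).comp (chain1 R t i))) ∧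
    (∀ i, CondG R t I0 F i)

end Tower
universe u

section Aux

variable {A : Type*} [CommRing A]

lemma grMk_congr (I : Ideal A) (n : ℕ) {x y : A} (h : x = y) (hx : x ∈ I ^ n) (hy : y ∈ I ^ n) :
    grMk I n x hx = grMk I n y hy := by subst h; rfl

lemma grMk_eq_zero_iff (I : Ideal A) (n : ℕ) {x : A} (hx : x ∈ I ^ n) :
    grMk I n x hx = 0 ↔ x ∈ I ^ (n + 1) := by
  rw [grMk, Submodule.Quotient.mk_eq_zero]
  rfl

lemma pow_mul_mem {I : Ideal A} {a : A} (ha : a ∈ I) (x : A) (n : ℕ) :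
    a ^ n * x ∈ I ^ n :=
  Ideal.mul_mem_right _ _ (Ideal.pow_mem_pow ha n)

section TowerAux


variable (R : ℕ → Type u) [∀ i, CommRing (R i)] (t : ∀ i, R i →+* R (i + 1))

lemma chain_comp : ∀ i, chain R t (i + 1) = (chain1 R t i).comp (chain R t 1)
  | 0 => by
    show chain R t 1 = (RingHom.id (R 1)).comp (chain R t 1)
    rw [RingHom.id_comp]
  | (i + 1) => by
    show (t (i + 1)).comp (chain R t (i + 1)) = ((t (i + 1)).comp (chain1 R t i)).comp (chain R t 1)
    rw [chain_comp i, RingHom.comp_assoc]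

end TowerAux

end Aux

lemma grMk_of_eq_zero {A : Type*} [CommRing A] (I : Ideal A) (n : ℕ) {x : A} (h : x = 0)
    (hx : x ∈ I ^ n) : grMk I n x hx = 0 := by
  subst h
  exact (grMk_eq_zero_iff I n hx).2 (zero_mem _)
/-- **Remark 3.9.** Without assuming that the `Rᵢ` are `I₀`-adically Zariskian, condition
(g') still implies condition (g), provided there exist generators `f₀` of `I₀` and `f₁` of
`I₁` with `Fᵢ(f₁ mod I₀Rᵢ₊₁) = f₀ mod I₀Rᵢ` for all `i`. -/
theorem stmt14
    (p : ℕ) (hp : p.Prime)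
    {R : ℕ → Type u} [∀ i, CommRing (R i)] (t : ∀ i, R i →+* R (i + 1))
    (I0 : Ideal (R 0))
    (hp0 : (p : R 0) ∈ I0)
    (hb : ∀ i, Function.Injective (tbar R t I0 i))
    (F : ∀ i, R (i + 1) ⧸ I0R R t I0 (i + 1) →+* R i ⧸ I0R R t I0 i)
    (hF : ∀ i x, tbar R t I0 i (F i x) = x ^ p)
    (hd : ∀ i, Function.Surjective (F i))
    (hI0 : I0.IsPrincipal)
    (I1 : Ideal (R 1)) (hI1 : I1.IsPrincipal)
    (hI1p : I1 ^ p = I0R R t I0 1)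
    (hker : ∀ i, RingHom.ker (F i) =
      I1.map ((Ideal.Quotient.mk (I0R R t I0 (i + 1))).comp (chain1 R t i)))
    (f0 : R 0) (hf0 : I0 = Ideal.span {f0})
    (f1 : R 1) (hf1 : I1 = Ideal.span {f1})
    (hgen : ∀ i, F i (Ideal.Quotient.mk (I0R R t I0 (i + 1)) (chain1 R t i f1)) =
      Ideal.Quotient.mk (I0R R t I0 i) (chain R t i f0)) :
    (∀ i, CondG' R t I0 F I1 i) → (∀ i, CondG R t I0 F i) := by
  intro hg' i
  obtain ⟨cond1B, gmap, hbij, hmul, hcomp⟩ := hg' i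
  obtain ⟨cond1A, -⟩ := hg' (i + 1)
  set g1 : R (i + 1) := chain1 R t i f1 with hg1def
  set g0 : R i := chain R t i f0 with hg0def
  have hJ1span : I1R R t I1 i = Ideal.span {g1} := by
    rw [I1R, hf1, Ideal.map_span, Set.image_singleton]
  have hJ0span : I0R R t I0 i = Ideal.span {g0} := by
    rw [I0R, hf0, Ideal.map_span, Set.image_singleton]
  have hg1J1 : g1 ∈ I1R R t I1 i := by
    rw [hJ1span]; exact Ideal.mem_span_singleton_self g1
  have hg0J0 : g0 ∈ I0R R t I0 i := by
    rw [hJ0span]; exact Ideal.mem_span_singleton_self g0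
  have hI0Rsucc : I0R R t I0 (i + 1) = (I1R R t I1 i) ^ p := by
    rw [I0R, chain_comp R t i, ← Ideal.map_map]
    have h1 : I0.map (chain R t 1) = I1 ^ p := hI1p.symm
    rw [h1, Ideal.map_pow, I1R]
  have hg1pspan : I0R R t I0 (i + 1) = Ideal.span {g1 ^ p} := by
    rw [hI0Rsucc, hJ1span, Ideal.span_singleton_pow]
  have hg1pmem : g1 ^ p ∈ I0R R t I0 (i + 1) := by
    rw [hg1pspan]; exact Ideal.mem_span_singleton_self _
  have hp1 : 1 ≤ p := hp.one_lt.le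
  -- torsion characterizations
  have hBof : ∀ x : R i, g0 * x = 0 → x ∈ Itor (I0R R t I0 i) (R i) := by
    intro x hx a ha
    rw [hJ0span, Ideal.mem_span_singleton] at ha
    obtain ⟨e, rfl⟩ := ha
    refine ⟨1, ?_⟩
    rw [pow_one, smul_eq_mul]
    calc g0 * e * x = e * (g0 * x) := by ring
    _ = 0 := by rw [hx, mul_zero]
  have H0 : ∀ (m : ℕ) (z : R i), g0 ^ (m + 1) * z = 0 → g0 * z = 0 := by
    intro m z hz
    refine cond1B g0 hg0J0 z ?_
    intro a ha
    rw [hJ0span, Ideal.mem_span_singleton] at ha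
    obtain ⟨e, rfl⟩ := ha
    refine ⟨m + 1, ?_⟩
    rw [smul_eq_mul, mul_pow]
    calc g0 ^ (m + 1) * e ^ (m + 1) * z = e ^ (m + 1) * (g0 ^ (m + 1) * z) := by ring
    _ = 0 := by rw [hz, mul_zero]
  have hAmem : ∀ z : R (i + 1), g1 ^ p * z = 0 →
      z ∈ Itor (I0R R t I0 (i + 1)) (R (i + 1)) := by
    intro z hz a ha
    rw [hg1pspan, Ideal.mem_span_singleton] at ha
    obtain ⟨e, rfl⟩ := ha
    refine ⟨1, ?_⟩
    rw [pow_one, smul_eq_mul]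
    calc g1 ^ p * e * z = e * (g1 ^ p * z) := by ring
    _ = 0 := by rw [hz, mul_zero]
  have hA2 : ∀ z : R (i + 1), g1 ^ (p + p) * z = 0 → g1 ^ p * z = 0 := by
    intro z hz
    refine cond1A (g1 ^ p) hg1pmem z ?_
    intro a ha
    rw [hg1pspan, Ideal.mem_span_singleton] at ha
    obtain ⟨e, rfl⟩ := ha
    refine ⟨2, ?_⟩
    rw [smul_eq_mul]
    calc (g1 ^ p * e) ^ 2 * z = e ^ 2 * (g1 ^ (p + p) * z) := by rw [pow_add]; ring
    _ = 0 := by rw [hz, mul_zero]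
  -- the element w
  have hg1p1 : g1 ∈ (I1R R t I1 i) ^ 1 := mem_pow_one hg1J1
  obtain ⟨⟨w, hw1⟩, hwz⟩ :=
    Submodule.Quotient.mk_surjective _ (gmap 1 (grMk (I1R R t I1 i) 1 g1 hg1p1))
  have hw0 : w ∈ I0R R t I0 i := by rw [← pow_one (I0R R t I0 i)]; exact hw1
  have hgw : gmap 1 (grMk (I1R R t I1 i) 1 g1 hg1p1) = grMk (I0R R t I0 i) 1 w hw1 := hwz.symm
  obtain ⟨e, hwe⟩ : g0 ∣ w := by
    rw [← Ideal.mem_span_singleton, ← hJ0span, ← pow_one (I0R R t I0 i)]; exact hw1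
  -- base relation g0 = b*w + s0*g0^2
  obtain ⟨b, s0, hb2⟩ : ∃ b s0, g0 = b * e * g0 + s0 * g0 ^ 2 := by
    obtain ⟨ξ1, hξ1⟩ := (hbij 1).2 (grMk (I0R R t I0 i) 1 g0 (mem_pow_one hg0J0))
    obtain ⟨⟨x1, hx1⟩, hmk1⟩ := Submodule.Quotient.mk_surjective _ ξ1
    obtain ⟨a1, ha1⟩ : g1 ∣ x1 := by
      rw [← Ideal.mem_span_singleton, ← hJ1span, ← pow_one (I1R R t I1 i)]; exact hx1
    obtain ⟨ua, hua⟩ := Ideal.Quotient.mk_surjective (F i (Ideal.Quotient.mk _ a1))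
    have hca := hcomp a1 ua hua
    have hmulres := hmul 0 1 a1 g1 (mem_pow_zero _ a1) hg1p1 ua w (mem_pow_zero _ ua) hw1 hca hgw
    have hval : grMk (I1R R t I1 i) 1 (a1 * g1) (mul_mem_pow_add (mem_pow_zero _ a1) hg1p1) = ξ1 := by
      rw [← hmk1]
      exact grMk_congr _ 1 (by rw [ha1]; ring) _ _
    have heq : grMk (I0R R t I0 i) 1 g0 (mem_pow_one hg0J0) =
        grMk (I0R R t I0 i) 1 (ua * w) (mul_mem_pow_add (mem_pow_zero _ ua) hw1) := by
      rw [← hξ1, ← hval]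
      exact hmulres
    rw [grMk_eq_iff] at heq
    rw [hJ0span, Ideal.span_singleton_pow, Ideal.mem_span_singleton] at heq
    obtain ⟨s, hs⟩ := heq
    exact ⟨ua, s, by linear_combination hs + ua * hwe⟩
  -- the powers relation
  have Spow : ∀ m : ℕ, ∃ c s, g0 ^ m = c * e ^ m * g0 ^ m + s * g0 ^ (m + 1) := by
    intro m
    induction m with
    | zero => exact ⟨1, 0, by ring⟩
    | succ m ih =>
      obtain ⟨c, s, ihm⟩ := ih
      exact ⟨b * c, b * e * s + s0, by linear_combination g0 ^ m * hb2 + b * e * g0 * ihm⟩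
  -- the colon lemma
  have colon : ∀ (m : ℕ) (u : R i), w ^ (m + 1) * u ∈ (I0R R t I0 i) ^ (m + 2) →
      ∃ τ : R i, g0 * τ = 0 ∧
        Ideal.Quotient.mk (I0R R t I0 i) τ = Ideal.Quotient.mk (I0R R t I0 i) u := by
    intro m u hu
    rw [hJ0span, Ideal.span_singleton_pow, Ideal.mem_span_singleton] at hu
    obtain ⟨d, hd2⟩ := hu
    obtain ⟨c, s, hcs⟩ := Spow (m + 1)
    have ht0 : g0 ^ (m + 1) * (1 - c * e ^ (m + 1) - s * g0) = 0 := by linear_combination hcs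
    have ht0' : g0 * (1 - c * e ^ (m + 1) - s * g0) = 0 := H0 m _ ht0
    have hwpow : w ^ (m + 1) = e ^ (m + 1) * g0 ^ (m + 1) := by rw [hwe]; ring
    have hτ1 : g0 ^ (m + 1) * (e ^ (m + 1) * u - d * g0) = 0 := by
      linear_combination hd2 - u * hwpow
    have hτ1' : g0 * (e ^ (m + 1) * u - d * g0) = 0 := H0 m _ hτ1
    refine ⟨c * (e ^ (m + 1) * u - d * g0) + (1 - c * e ^ (m + 1) - s * g0) * u, ?_, ?_⟩
    · calc g0 * (c * (e ^ (m + 1) * u - d * g0) + (1 - c * e ^ (m + 1) - s * g0) * u)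
          = c * (g0 * (e ^ (m + 1) * u - d * g0)) + (g0 * (1 - c * e ^ (m + 1) - s * g0)) * u := by
            ring
      _ = 0 := by rw [hτ1', ht0']; ring
    · rw [Ideal.Quotient.mk_eq_mk_iff_sub_mem, hJ0span, Ideal.mem_span_singleton]
      exact ⟨-(c * d) - s * u, by ring⟩
  -- lemma 3 : compatibility in all degrees
  have lemma3 : ∀ (x : R (i + 1)) (u : R i),
      Ideal.Quotient.mk (I0R R t I0 i) u = F i (Ideal.Quotient.mk (I0R R t I0 (i + 1)) x) →
      ∀ n, gmap n (grMk (I1R R t I1 i) n (g1 ^ n * x) (pow_mul_mem hg1J1 x n)) =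
        grMk (I0R R t I0 i) n (w ^ n * u) (pow_mul_mem hw0 u n) := by
    intro x u hu n
    induction n with
    | zero =>
      calc gmap 0 (grMk (I1R R t I1 i) 0 (g1 ^ 0 * x) (pow_mul_mem hg1J1 x 0))
          = gmap 0 (grMk (I1R R t I1 i) 0 x (mem_pow_zero _ x)) := by
            exact congrArg (gmap 0) (grMk_congr _ 0 (by ring) _ _)
      _ = grMk (I0R R t I0 i) 0 u (mem_pow_zero _ u) := hcomp x u hu
      _ = grMk (I0R R t I0 i) 0 (w ^ 0 * u) (pow_mul_mem hw0 u 0) := grMk_congr _ 0 (by ring) _ _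
    | succ n ih =>
      have step := hmul n 1 (g1 ^ n * x) g1 (pow_mul_mem hg1J1 x n) hg1p1
        (w ^ n * u) w (pow_mul_mem hw0 u n) hw1 ih hgw
      calc gmap (n + 1) (grMk (I1R R t I1 i) (n + 1) (g1 ^ (n + 1) * x) (pow_mul_mem hg1J1 x (n + 1)))
          = gmap (n + 1) (grMk (I1R R t I1 i) (n + 1) ((g1 ^ n * x) * g1)
              (mul_mem_pow_add (pow_mul_mem hg1J1 x n) hg1p1)) := by
            exact congrArg (gmap (n + 1)) (grMk_congr _ (n + 1) (by ring) _ _)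
      _ = grMk (I0R R t I0 i) (n + 1) ((w ^ n * u) * w)
            (mul_mem_pow_add (pow_mul_mem hw0 u n) hw1) := step
      _ = grMk (I0R R t I0 i) (n + 1) (w ^ (n + 1) * u) (pow_mul_mem hw0 u (n + 1)) :=
            grMk_congr _ (n + 1) (by ring) _ _
  -- key construction
  have key : ∀ x : R (i + 1), g1 ^ p * x = 0 →
      ∃ τ : R i, g0 * τ = 0 ∧
        Ideal.Quotient.mk (I0R R t I0 i) τ = F i (Ideal.Quotient.mk (I0R R t I0 (i + 1)) x) := by
    intro x hx
    obtain ⟨u, hu⟩ := Ideal.Quotient.mk_surjective (F i (Ideal.Quotient.mk (I0R R t I0 (i + 1)) x))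
    have l3 := lemma3 x u hu p
    have hz : grMk (I1R R t I1 i) p (g1 ^ p * x) (pow_mul_mem hg1J1 x p) = 0 :=
      grMk_of_eq_zero _ p hx _
    have hz2 : grMk (I0R R t I0 i) p (w ^ p * u) (pow_mul_mem hw0 u p) = 0 := by
      rw [← l3, hz, map_zero]
    have hmem : w ^ p * u ∈ (I0R R t I0 i) ^ (p + 1) := (grMk_eq_zero_iff _ _ _).1 hz2
    obtain ⟨m, hm⟩ : ∃ m, p = m + 1 := ⟨p - 1, (Nat.succ_pred_eq_of_pos hp.pos).symm⟩
    rw [hm] at hmem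
    obtain ⟨τ, hτ0, hτmk⟩ := colon m u hmem
    exact ⟨τ, hτ0, by rw [hτmk, hu]⟩
  -- L1 : decomposition of annihilated elements
  have L1 : ∀ (m : ℕ) (bb : R (i + 1)), g1 ^ (m + 1) * bb = 0 →
      ∃ c τ, g1 * τ = 0 ∧ bb = g1 * c + τ := by
    intro m bb hbb
    obtain ⟨u, hu⟩ := Ideal.Quotient.mk_surjective (F i (Ideal.Quotient.mk (I0R R t I0 (i + 1)) bb))
    have l3 := lemma3 bb u hu (m + 1)
    have hz : grMk (I1R R t I1 i) (m + 1) (g1 ^ (m + 1) * bb) (pow_mul_mem hg1J1 bb (m + 1)) = 0 :=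
      grMk_of_eq_zero _ (m + 1) hbb _
    have hz2 : grMk (I0R R t I0 i) (m + 1) (w ^ (m + 1) * u) (pow_mul_mem hw0 u (m + 1)) = 0 := by
      rw [← l3, hz, map_zero]
    have hmem : w ^ (m + 1) * u ∈ (I0R R t I0 i) ^ (m + 2) := (grMk_eq_zero_iff _ _ _).1 hz2
    obtain ⟨τ0, hτ00, hτ0mk⟩ := colon m u hmem
    have hsub : u - τ0 ∈ I0R R t I0 i := by
      have := (Ideal.Quotient.mk_eq_mk_iff_sub_mem τ0 u).1 hτ0mk
      simpa using neg_mem this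
    have hwτ0 : w * τ0 = 0 := by
      rw [hwe]
      calc g0 * e * τ0 = e * (g0 * τ0) := by ring
      _ = 0 := by rw [hτ00, mul_zero]
    have hwu : w ^ 1 * u ∈ (I0R R t I0 i) ^ (1 + 1) := by
      have h1 : w * (u - τ0) ∈ (I0R R t I0 i) ^ 2 := by
        rw [pow_two]; exact Ideal.mul_mem_mul hw0 hsub
      have h2 : w ^ 1 * u = w * (u - τ0) := by
        calc w ^ 1 * u = w * (u - τ0) + w * τ0 := by ring
        _ = w * (u - τ0) := by rw [hwτ0, add_zero]
      rw [h2]; exact h1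
    have l31 := lemma3 bb u hu 1
    have hz3 : gmap 1 (grMk (I1R R t I1 i) 1 (g1 ^ 1 * bb) (pow_mul_mem hg1J1 bb 1)) = 0 := by
      rw [l31]
      exact (grMk_eq_zero_iff _ _ _).2 hwu
    have hz4 : grMk (I1R R t I1 i) 1 (g1 ^ 1 * bb) (pow_mul_mem hg1J1 bb 1) = 0 := by
      apply (hbij 1).1
      rw [hz3, map_zero]
    have hmem2 : g1 ^ 1 * bb ∈ (I1R R t I1 i) ^ 2 := (grMk_eq_zero_iff _ _ _).1 hz4
    rw [hJ1span, Ideal.span_singleton_pow, Ideal.mem_span_singleton] at hmem2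
    obtain ⟨c, hc⟩ := hmem2
    refine ⟨c, bb - g1 * c, by linear_combination hc, by ring⟩
  -- existence of the torsion map
  have hex : ∀ x : Itor (I0R R t I0 (i + 1)) (R (i + 1)),
      ∃ τ : Itor (I0R R t I0 i) (R i),
        Ideal.Quotient.mk (I0R R t I0 i) τ.1 =
          F i (Ideal.Quotient.mk (I0R R t I0 (i + 1)) x.1) := by
    intro x
    have hx : g1 ^ p * x.1 = 0 := cond1A (g1 ^ p) hg1pmem x.1 x.2
    obtain ⟨τ, hτ0, hτmk⟩ := key x.1 hx
    exact ⟨⟨τ, hBof τ hτ0⟩, hτmk⟩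
  choose Ftor hFtor using hex
  have hker2 : RingHom.ker (F i) =
      (I1R R t I1 i).map (Ideal.Quotient.mk (I0R R t I0 (i + 1))) := by
    rw [hker i, I1R, Ideal.map_map]
  refine ⟨cond1B, Ftor, ⟨?_, ?_⟩, hFtor⟩
  · -- injectivity
    intro x x' hxx
    have hFF : F i (Ideal.Quotient.mk (I0R R t I0 (i + 1)) x.1) =
        F i (Ideal.Quotient.mk (I0R R t I0 (i + 1)) x'.1) := by
      rw [← hFtor x, ← hFtor x', hxx]
    have hker' : Ideal.Quotient.mk (I0R R t I0 (i + 1)) (x.1 - x'.1) ∈ RingHom.ker (F i) := by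
      rw [RingHom.mem_ker, map_sub, map_sub, hFF, sub_self]
    rw [hker2, Ideal.mem_quotient_iff_mem_sup] at hker'
    have hsup : I1R R t I1 i ⊔ I0R R t I0 (i + 1) = I1R R t I1 i := by
      refine sup_eq_left.mpr ?_
      rw [hI0Rsucc]
      exact Ideal.pow_le_self hp.pos.ne'
    rw [hsup, hJ1span, Ideal.mem_span_singleton] at hker'
    obtain ⟨a0, ha0⟩ := hker'
    have h1 : g1 ^ p * x.1 = 0 := cond1A (g1 ^ p) hg1pmem x.1 x.2
    have h2 : g1 ^ p * x'.1 = 0 := cond1A (g1 ^ p) hg1pmem x'.1 x'.2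
    have hpy : g1 ^ p * (x.1 - x'.1) = 0 := by rw [mul_sub, h1, h2, sub_zero]
    have claim : ∀ k : ℕ, ∃ bk, x.1 - x'.1 = g1 ^ (k + 1) * bk := by
      intro k
      induction k with
      | zero => exact ⟨a0, by rw [pow_one]; exact ha0⟩
      | succ k ih =>
        obtain ⟨bk, hbk⟩ := ih
        have hbkill : g1 ^ (p + k + 1) * bk = 0 := by
          calc g1 ^ (p + k + 1) * bk = g1 ^ p * (g1 ^ (k + 1) * bk) := by ring
          _ = g1 ^ p * (x.1 - x'.1) := by rw [← hbk]
          _ = 0 := hpy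
        obtain ⟨c, τ, hτ, hcτ⟩ := L1 (p + k) bk hbkill
        refine ⟨c, ?_⟩
        rw [hbk, hcτ]
        calc g1 ^ (k + 1) * (g1 * c + τ) = g1 ^ (k + 2) * c + g1 ^ k * (g1 * τ) := by ring
        _ = g1 ^ (k + 1 + 1) * c := by rw [hτ, mul_zero, add_zero]
    obtain ⟨bk, hbfin⟩ := claim (p - 1)
    rw [Nat.sub_add_cancel hp1] at hbfin
    have h2p : g1 ^ (p + p) * bk = 0 := by
      calc g1 ^ (p + p) * bk = g1 ^ p * (g1 ^ p * bk) := by ring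
      _ = g1 ^ p * (x.1 - x'.1) := by rw [← hbfin]
      _ = 0 := hpy
    have hfin : g1 ^ p * bk = 0 := hA2 bk h2p
    have hy0 : x.1 - x'.1 = 0 := by rw [hbfin, hfin]
    exact Subtype.ext (sub_eq_zero.mp hy0)
  · -- surjectivity
    intro σ
    have hσ0 : g0 * σ.1 = 0 := cond1B g0 hg0J0 σ.1 σ.2
    obtain ⟨ξ, hξ⟩ := hd i (Ideal.Quotient.mk (I0R R t I0 i) σ.1)
    obtain ⟨x0, rfl⟩ := Ideal.Quotient.mk_surjective ξ
    have hu : Ideal.Quotient.mk (I0R R t I0 i) σ.1 =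
        F i (Ideal.Quotient.mk (I0R R t I0 (i + 1)) x0) := hξ.symm
    have l3 := lemma3 x0 σ.1 hu p
    have hwz0 : w ^ p * σ.1 = 0 := by
      obtain ⟨m, hm⟩ : ∃ m, p = m + 1 := ⟨p - 1, (Nat.succ_pred_eq_of_pos hp.pos).symm⟩
      rw [hm, hwe]
      calc (g0 * e) ^ (m + 1) * σ.1 = e ^ (m + 1) * g0 ^ m * (g0 * σ.1) := by ring
      _ = 0 := by rw [hσ0, mul_zero]
    have hz : gmap p (grMk (I1R R t I1 i) p (g1 ^ p * x0) (pow_mul_mem hg1J1 x0 p)) = 0 := by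
      rw [l3]
      exact grMk_of_eq_zero _ p hwz0 _
    have hz4 : grMk (I1R R t I1 i) p (g1 ^ p * x0) (pow_mul_mem hg1J1 x0 p) = 0 := by
      apply (hbij p).1
      rw [hz, map_zero]
    have hg1px0 : g1 ^ p * x0 ∈ (I1R R t I1 i) ^ (p + 1) :=
      (grMk_eq_zero_iff _ _ (pow_mul_mem hg1J1 x0 p)).1 hz4
    rw [hJ1span, Ideal.span_singleton_pow, Ideal.mem_span_singleton] at hg1px0
    obtain ⟨c, hc⟩ := hg1px0
    have hxkill : g1 ^ p * (x0 - g1 * c) = 0 := by linear_combination hc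
    have hxmem : (x0 - g1 * c) ∈ Itor (I0R R t I0 (i + 1)) (R (i + 1)) := hAmem _ hxkill
    have hFx : F i (Ideal.Quotient.mk (I0R R t I0 (i + 1)) (x0 - g1 * c)) =
        Ideal.Quotient.mk (I0R R t I0 i) σ.1 := by
      have hgc : Ideal.Quotient.mk (I0R R t I0 (i + 1)) (g1 * c) ∈ RingHom.ker (F i) := by
        rw [hker2]
        exact Ideal.mem_map_of_mem _ (Ideal.mul_mem_right c _ hg1J1)
      rw [RingHom.mem_ker] at hgc
      rw [map_sub, map_sub, hgc, sub_zero, hξ]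
    refine ⟨⟨x0 - g1 * c, hxmem⟩, ?_⟩
    apply Subtype.ext
    have hsub : g0 ∣ ((Ftor ⟨x0 - g1 * c, hxmem⟩).1 - σ.1) := by
      rw [← Ideal.mem_span_singleton, ← hJ0span]
      refine (Ideal.Quotient.mk_eq_mk_iff_sub_mem _ _).mp ?_
      rw [hFtor ⟨x0 - g1 * c, hxmem⟩, hFx]
    obtain ⟨c2, hc2⟩ := hsub
    have hkill2 : g0 * (Ftor ⟨x0 - g1 * c, hxmem⟩).1 = 0 :=
      cond1B g0 hg0J0 _ (Ftor ⟨x0 - g1 * c, hxmem⟩).2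
    have hg02 : g0 ^ (1 + 1) * c2 = 0 := by linear_combination hkill2 - hσ0 - g0 * hc2
    have hgc2 : g0 * c2 = 0 := H0 1 c2 hg02
    have : (Ftor ⟨x0 - g1 * c, hxmem⟩).1 - σ.1 = 0 := by rw [hc2, hgc2]
    exact sub_eq_zero.mp this
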